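/- For every integer ℓ ≥ 4, the k-linear map Hom_A(P_{ℓ−1}, k_ε) → Hom_A(P_ℓ, k_ε), g ↦ g ∘ d_ℓ, has kernel of k-dimension 2n² and image of k-dimension 2n². -/

import Mathlib

/-!
Common setting (from the paper "The Anick resolution of the co-unit of the free unitary
quantum group", arXiv:2403.06663):

`k` is a field and `n ≥ 2`.  `S` is the set of `2n²` generators `u∘_{j,i}, u•_{j,i}`,
`(j,i) ∈ {1,…,n}²`, with the involution `*` exchanging `u∘_{j,i}` and `u•_{j,i}`.
Indices are realized `0`-based as elements of `Fin n` (so the index `1` is `fin1 = 0`,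
the index `n` is `finN = n-1`, and `σ(i) = n-i+1` is `Fin.rev`).
-/

namespace UnPlusAnick

/-- A generator: a color (`false` = white `∘`, `true` = black `•`) and a pair of indices. -/
abbrev Gen (n : ℕ) := Bool × Fin n × Fin n

/-- The involution `*` on the generators: it flips the color and keeps the indices. -/
def genStar {n : ℕ} (g : Gen n) : Gen n := (!g.1, g.2)

/-- An `n × n` matrix with entries in the set of generators. -/
abbrev Mat (n : ℕ) := Fin n → Fin n → Gen n

/-- The fundamental matrix `u`, `u_{j,i} = u∘_{j,i}`. -/
def uMat (n : ℕ) : Mat n := fun j i => (false, j, i)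

/-- The transpose `vᵀ`. -/
def mT {n : ℕ} (v : Mat n) : Mat n := fun j i => v i j

/-- The matrix `v^σ`, `(v^σ)_{j,i} = (v_{σ(j),σ(i)})^*`. -/
def mS {n : ℕ} (v : Mat n) : Mat n := fun j i => genStar (v j.rev i.rev)

/-- The matrix `v^δ`, `(v^δ)_{j,i} = (v_{σ(i),σ(j)})^*`; thus `v^δ = (v^σ)ᵀ`. -/
def mD {n : ℕ} (v : Mat n) : Mat n := fun j i => genStar (v i.rev j.rev)

/-- The set `V = {u, uᵀ, u^σ, u^δ}`. -/
def V (n : ℕ) : Set (Mat n) := {uMat n, mT (uMat n), mS (uMat n), mD (uMat n)}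

/-- The index `1` of `{1, …, n}`, as the `0`-based element `0` of `Fin n`. -/
def fin1 (n : ℕ) (hn : 2 ≤ n) : Fin n := ⟨0, by omega⟩

/-- The index `n` of `{1, …, n}`, as the `0`-based element `n - 1` of `Fin n`. -/
def finN (n : ℕ) (hn : 2 ≤ n) : Fin n := ⟨n - 1, by omega⟩

theorem genStar_genStar {n : ℕ} (g : Gen n) : genStar (genStar g) = g := by simp [genStar]

theorem mS_mS {n : ℕ} (v : Mat n) : mS (mS v) = v := by
  funext j i; simp [mS, genStar_genStar]

theorem mD_mD {n : ℕ} (v : Mat n) : mD (mD v) = v := by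
  funext j i; simp [mD, genStar_genStar]

theorem mS_mD {n : ℕ} (v : Mat n) : mS (mD v) = mT v := by
  funext j i; simp [mS, mD, mT, genStar_genStar]

theorem mD_mS {n : ℕ} (v : Mat n) : mD (mS v) = mT v := by
  funext j i; simp [mS, mD, mT, genStar_genStar]

/-- `V` is closed under transposition. -/
theorem V_mT {n : ℕ} {v : Mat n} (hv : v ∈ V n) : mT v ∈ V n := by
  simp only [V, Set.mem_insert_iff, Set.mem_singleton_iff] at hv ⊢
  rcases hv with rfl | rfl | rfl | rfl
  · exact Or.inr (Or.inl rfl)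
  · exact Or.inl rfl
  · exact Or.inr (Or.inr (Or.inr rfl))
  · exact Or.inr (Or.inr (Or.inl rfl))

/-- `V` is closed under `v ↦ v^σ`. -/
theorem V_mS {n : ℕ} {v : Mat n} (hv : v ∈ V n) : mS v ∈ V n := by
  simp only [V, Set.mem_insert_iff, Set.mem_singleton_iff] at hv ⊢
  rcases hv with rfl | rfl | rfl | rfl
  · exact Or.inr (Or.inr (Or.inl rfl))
  · exact Or.inr (Or.inr (Or.inr rfl))
  · exact Or.inl (mS_mS _)
  · exact Or.inr (Or.inl (mS_mD _))

/-- `V` is closed under `v ↦ v^δ`. -/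
theorem V_mD {n : ℕ} {v : Mat n} (hv : v ∈ V n) : mD v ∈ V n := by
  simp only [V, Set.mem_insert_iff, Set.mem_singleton_iff] at hv ⊢
  rcases hv with rfl | rfl | rfl | rfl
  · exact Or.inr (Or.inr (Or.inr rfl))
  · exact Or.inr (Or.inr (Or.inl rfl))
  · exact Or.inr (Or.inl (mD_mS _))
  · exact Or.inl (mD_mD _)

/-! ### Words and the free algebra -/

/-- Words in the generators: the free monoid over the set of generators. -/
abbrev Word (n : ℕ) := FreeMonoid (Gen n)

/-- The free unital associative `k`-algebra on the generators, realized as the monoid algebra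
of the free monoid of words; its canonical `k`-basis is the set of words. -/
abbrev FreeAlg (k : Type*) [Field k] (n : ℕ) := MonoidAlgebra k (Word n)

/-- A word, viewed as a monomial in the free algebra. -/
noncomputable def wd (k : Type*) [Field k] {n : ℕ} (w : Word n) : FreeAlg k n :=
  MonoidAlgebra.of k (Word n) w

/-- The relation `b^v_{j,i} = ∑_{s=1}^{n} v_{j,σ(s)} (v^δ)_{s,σ(i)} − δ_{j,i} · 1`. -/
noncomputable def brel (k : Type*) [Field k] {n : ℕ} (v : Mat n) (j i : Fin n) : FreeAlg k n :=
  (∑ s : Fin n, wd k (FreeMonoid.of (v j s.rev) * FreeMonoid.of (mD v s i.rev)))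
    - if j = i then 1 else 0

/-- The set of relations `R = {b^v_{j,i} : v ∈ V, (j,i) ∈ {1,…,n}²}`. -/
def rels (k : Type*) [Field k] (n : ℕ) : Set (FreeAlg k n) :=
  {x | ∃ v ∈ V n, ∃ j i : Fin n, x = brel k v j i}

/-- `b̃^v = v_{n,n}(v^δ)_{1,1} − ∑_{s=2}^{n} ∑_{t=1}^{n−1} v_{t,σ(s)}(v^δ)_{s,σ(t)} + (n−2)·1`. -/
noncomputable def btil (k : Type*) [Field k] (n : ℕ) (hn : 2 ≤ n) (v : Mat n) : FreeAlg k n :=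
  wd k (FreeMonoid.of (v (finN n hn) (finN n hn)) * FreeMonoid.of (mD v (fin1 n hn) (fin1 n hn)))
    - (∑ s ∈ Finset.univ.filter (fun s : Fin n => s ≠ fin1 n hn),
        ∑ t ∈ Finset.univ.filter (fun t : Fin n => t ≠ finN n hn),
          wd k (FreeMonoid.of (v t s.rev) * FreeMonoid.of (mD v s t.rev)))
    + ((n - 2 : ℕ) : FreeAlg k n)

/-! ### The monomial order and tips -/

/-- The strict order on the generators: every black generator is smaller than every white one;
`u•_{t,s} < u•_{j,i}` iff `(j,i) <` `(t,s)` lexicographically, and `u∘_{t,s} < u∘_{j,i}` iff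
`(t,s) < (j,i)` lexicographically. -/
def genLT {n : ℕ} (g h : Gen n) : Prop :=
  (g.1 = true ∧ h.1 = false) ∨
    (g.1 = true ∧ h.1 = true ∧ toLex h.2 < toLex g.2) ∨
    (g.1 = false ∧ h.1 = false ∧ toLex g.2 < toLex h.2)

/-- The degreewise lexicographic extension of the order on generators to words:
`w ≤ w'` iff `w = w'`, or `w` is shorter than `w'`, or they have the same length and `w`
precedes `w'` lexicographically letter by letter. -/
def wordLE {n : ℕ} (w w' : Word n) : Prop :=
  w = w' ∨ (FreeMonoid.toList w).length < (FreeMonoid.toList w').length ∨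
    ((FreeMonoid.toList w).length = (FreeMonoid.toList w').length ∧
      List.Lex genLT (FreeMonoid.toList w) (FreeMonoid.toList w'))

/-- `IsTip f t`: the word `t` is the `≤`-largest word occurring with nonzero coefficient in
`f`, i.e. `Tip(f) = t`. -/
def IsTip (k : Type*) [Field k] {n : ℕ} (f : FreeAlg k n) (t : Word n) : Prop :=
  f.coeff t ≠ 0 ∧ ∀ w : Word n, f.coeff w ≠ 0 → wordLE w t

/-- `w` divides `w'` (as words in the free monoid). -/
def WDvd {n : ℕ} (w w' : Word n) : Prop := ∃ w₁ w₂ : Word n, w' = w₁ * w * w₂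

/-! ### The ideal of relations -/

/-- The two-sided ideal `I` of the free algebra generated by the set of relations `R`. -/
noncomputable def idl (k : Type*) [Field k] (n : ℕ) : TwoSidedIdeal (FreeAlg k n) :=
  TwoSidedIdeal.span (rels k n)

/-- The set `Tip(I)` of tips of nonzero elements of `I`. -/
def TipSet (k : Type*) [Field k] (n : ℕ) : Set (Word n) :=
  {w | ∃ f : FreeAlg k n, f ∈ idl k n ∧ f ≠ 0 ∧ IsTip k f w}

/-! ### Reductions and ambiguities -/

/-- `φ` is a one-step reduction by `f`: there are fixed words `w₁`, `w₂` such that `φ` maps the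
word `w₁ Tip(f) w₂` to `w₁ (Tip(f) − c⁻¹ f) w₂`, where `c` is the leading coefficient of `f`,
and fixes every other word. -/
def IsOneStep (k : Type*) [Field k] {n : ℕ} (f : FreeAlg k n)
    (φ : FreeAlg k n →ₗ[k] FreeAlg k n) : Prop :=
  f ≠ 0 ∧ ∃ (w₁ w₂ t : Word n), IsTip k f t ∧
    φ (wd k (w₁ * t * w₂)) = wd k w₁ * (wd k t - (f.coeff t)⁻¹ • f) * wd k w₂ ∧
    ∀ w : Word n, w ≠ w₁ * t * w₂ → φ (wd k w) = wd k w

/-- A reduction by a set `G`: a finite composition of one-step reductions by nonzero elements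
of `G`. -/
inductive IsReduction (k : Type*) [Field k] {n : ℕ} (G : Set (FreeAlg k n)) :
    (FreeAlg k n →ₗ[k] FreeAlg k n) → Prop
  | id : IsReduction k G LinearMap.id
  | comp {φ ψ : FreeAlg k n →ₗ[k] FreeAlg k n} {g : FreeAlg k n} (hg : g ∈ G)
      (hφ : IsOneStep k g φ) (hψ : IsReduction k G ψ) : IsReduction k G (φ ∘ₗ ψ)

/-- `(g, g', w₁, w₂)` is an inclusion ambiguity of `G`. -/
def IsInclusionAmbiguity (k : Type*) [Field k] {n : ℕ} (G : Set (FreeAlg k n))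
    (g g' : FreeAlg k n) (w₁ w₂ : Word n) : Prop :=
  g ∈ G ∧ g' ∈ G ∧ g ≠ 0 ∧ g' ≠ 0 ∧ g ≠ g' ∧
    ∃ t t' : Word n, IsTip k g t ∧ IsTip k g' t' ∧ w₁ * t * w₂ = t'

/-- The inclusion ambiguity `(g, g', w₁, w₂)` of `G` resolves. -/
def InclusionAmbiguityResolves (k : Type*) [Field k] {n : ℕ} (G : Set (FreeAlg k n))
    (g g' : FreeAlg k n) (w₁ w₂ : Word n) : Prop :=
  ∀ t t' : Word n, IsTip k g t → IsTip k g' t' →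
    ∃ φ₁ φ₂ : FreeAlg k n →ₗ[k] FreeAlg k n, IsReduction k G φ₁ ∧ IsReduction k G φ₂ ∧
      φ₁ (wd k t' - (g'.coeff t')⁻¹ • g') = φ₂ (wd k w₁ * (wd k t - (g.coeff t)⁻¹ • g) * wd k w₂)

/-- `(g₁, g₂, w₁, w₂)` is an overlap ambiguity of `G`. -/
def IsOverlapAmbiguity (k : Type*) [Field k] {n : ℕ} (G : Set (FreeAlg k n))
    (g₁ g₂ : FreeAlg k n) (w₁ w₂ : Word n) : Prop :=
  g₁ ∈ G ∧ g₂ ∈ G ∧ g₁ ≠ 0 ∧ g₂ ≠ 0 ∧ ¬(w₁ = 1 ∧ w₂ = 1) ∧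
    ∃ t₁ t₂ : Word n, IsTip k g₁ t₁ ∧ IsTip k g₂ t₂ ∧ t₁ * w₂ = w₁ * t₂ ∧
      ¬WDvd t₂ w₂ ∧ ¬WDvd t₁ w₁

/-- The overlap ambiguity `(g₁, g₂, w₁, w₂)` of `G` resolves. -/
def OverlapAmbiguityResolves (k : Type*) [Field k] {n : ℕ} (G : Set (FreeAlg k n))
    (g₁ g₂ : FreeAlg k n) (w₁ w₂ : Word n) : Prop :=
  ∀ t₁ t₂ : Word n, IsTip k g₁ t₁ → IsTip k g₂ t₂ →
    ∃ φ₁ φ₂ : FreeAlg k n →ₗ[k] FreeAlg k n, IsReduction k G φ₁ ∧ IsReduction k G φ₂ ∧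
      φ₁ ((wd k t₁ - (g₁.coeff t₁)⁻¹ • g₁) * wd k w₂) = φ₂ (wd k w₁ * (wd k t₂ - (g₂.coeff t₂)⁻¹ • g₂))

/-! ### Gröbner bases -/

/-- `G` is a Gröbner basis of the two-sided ideal `J` with respect to the order: `G ⊆ J` and
the tip of every nonzero element of `J` is divisible by the tip of some nonzero element
of `G`. -/
def IsGroebner (k : Type*) [Field k] {n : ℕ} (G : Set (FreeAlg k n))
    (J : TwoSidedIdeal (FreeAlg k n)) : Prop :=
  (∀ g ∈ G, g ∈ J) ∧
    ∀ f : FreeAlg k n, f ∈ J → f ≠ 0 → ∀ t : Word n, IsTip k f t →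
      ∃ g ∈ G, g ≠ 0 ∧ ∃ tg : Word n, IsTip k g tg ∧ WDvd tg t

/-- A minimal Gröbner basis: `0 ∉ G` and the tip of no element of `G` divides the tip of a
different element of `G`. -/
def IsMinimalGroebner (k : Type*) [Field k] {n : ℕ} (G : Set (FreeAlg k n))
    (J : TwoSidedIdeal (FreeAlg k n)) : Prop :=
  IsGroebner k G J ∧ (0 : FreeAlg k n) ∉ G ∧
    ∀ g ∈ G, ∀ g' ∈ G, g ≠ g' → ∀ t t' : Word n, IsTip k g t → IsTip k g' t' → ¬WDvd t t'

/-- A reduced Gröbner basis: minimal, every element has leading coefficient `1`, and the tip of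
no element of `G` divides a word occurring with nonzero coefficient in a different element
of `G`. -/
def IsReducedGroebner (k : Type*) [Field k] {n : ℕ} (G : Set (FreeAlg k n))
    (J : TwoSidedIdeal (FreeAlg k n)) : Prop :=
  IsMinimalGroebner k G J ∧ (∀ g ∈ G, ∀ t : Word n, IsTip k g t → g.coeff t = 1) ∧
    ∀ g ∈ G, ∀ g' ∈ G, g ≠ g' → ∀ t : Word n, IsTip k g t →
      ∀ w : Word n, g'.coeff w ≠ 0 → ¬WDvd t w

/-! ### Monoidal ideals -/

/-- A monoidal ideal of the free monoid of words: a set of words containing all multiples of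
its elements. -/
def IsMonIdeal {n : ℕ} (M : Set (Word n)) : Prop :=
  ∀ w ∈ M, ∀ w₁ w₂ : Word n, w₁ * w * w₂ ∈ M

/-- `N` generates `M` as a monoidal ideal: `M` is the smallest monoidal ideal containing `N`. -/
def GeneratesMonIdeal {n : ℕ} (N M : Set (Word n)) : Prop :=
  IsMonIdeal M ∧ N ⊆ M ∧ ∀ M' : Set (Word n), IsMonIdeal M' → N ⊆ M' → M ⊆ M'

/-! ### Chain words -/

/-- `v^{[ℓ]}`: equal to `v` for odd `ℓ` and to `v^δ` for even `ℓ`. -/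
def pw {n : ℕ} (l : ℕ) (v : Mat n) : Mat n := if l % 2 = 1 then v else mD v

/-- The word `v^{(ℓ)}_{j,i}` (for `ℓ ≥ 1`). -/
def chainWord (n : ℕ) (hn : 2 ≤ n) (v : Mat n) (l : ℕ) (j i : Fin n) : Word n :=
  if l = 1 then FreeMonoid.of (v j i.rev)
  else if l % 2 = 0 then
    FreeMonoid.of (v j (finN n hn)) *
      (FreeMonoid.of (mD v (fin1 n hn) (finN n hn)) *
          FreeMonoid.of (v (fin1 n hn) (finN n hn))) ^ ((l - 2) / 2) *
      FreeMonoid.of (mD v (fin1 n hn) i.rev)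
  else
    FreeMonoid.of (v j (finN n hn)) *
      (FreeMonoid.of (mD v (fin1 n hn) (finN n hn)) *
          FreeMonoid.of (v (fin1 n hn) (finN n hn))) ^ ((l - 3) / 2) *
      FreeMonoid.of (mD v (fin1 n hn) (finN n hn)) * FreeMonoid.of (v (fin1 n hn) i.rev)

/-- The set `C_ℓ = {v^{(ℓ)}_{j,i} : v ∈ V, (j,i) ∈ {1,…,n}²}` of `ℓ`-chains. -/
def Cset (n : ℕ) (hn : 2 ≤ n) (l : ℕ) : Set (Word n) :=
  {w | ∃ v ∈ V n, ∃ j i : Fin n, w = chainWord n hn v l j i}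

/-! ### The quotient algebra `A = F/I`, the counit and the modules of the resolution -/

/-- The relation identifying each element of `R` with `0`; the induced ring congruence realizes
the quotient `A = F/I` by the two-sided ideal `I` generated by `R`. -/
def relR (k : Type*) [Field k] (n : ℕ) : FreeAlg k n → FreeAlg k n → Prop :=
  fun a b => a ∈ rels k n ∧ b = 0

/-- The `k`-algebra `A = F/I`. -/
abbrev Aq (k : Type*) [Field k] (n : ℕ) := RingQuot (relR k n)

/-- The quotient map `F → A = F/I`. -/
noncomputable def pr (k : Type*) [Field k] (n : ℕ) : FreeAlg k n →ₐ[k] Aq k n :=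
  RingQuot.mkAlgHom k (relR k n)

/-- The class `v_{j,i} + I ∈ A` of a generator. -/
noncomputable def gen (k : Type*) [Field k] {n : ℕ} (v : Mat n) (j i : Fin n) : Aq k n :=
  pr k n (wd k (FreeMonoid.of (v j i)))

/-- The ring homomorphism `Aᵐᵒᵖ →+* k` induced by `ε` (using the commutativity of `k`). -/
noncomputable def epsOp (k : Type*) [Field k] (n : ℕ) (ε : Aq k n →ₐ[k] k) :
    (Aq k n)ᵐᵒᵖ →+* k where
  toFun a := ε a.unop
  map_one' := by simp
  map_mul' a b := by simp [mul_comm]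
  map_zero' := by simp
  map_add' a b := by simp

/-- The right `A`-module `k_ε`: the field `k` with the right `A`-action induced by `ε`,
realized as a left module over the opposite algebra `Aᵐᵒᵖ`. -/
def KE (k : Type*) [Field k] (n : ℕ) (_ε : Aq k n →ₐ[k] k) : Type _ := k

instance (k : Type*) [Field k] (n : ℕ) (ε : Aq k n →ₐ[k] k) : AddCommGroup (KE k n ε) :=
  inferInstanceAs (AddCommGroup k)

instance (k : Type*) [Field k] (n : ℕ) (ε : Aq k n →ₐ[k] k) : Module k (KE k n ε) :=
  inferInstanceAs (Module k k)

instance (k : Type*) [Field k] (n : ℕ) (ε : Aq k n →ₐ[k] k) : One (KE k n ε) := ⟨(1 : k)⟩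

noncomputable instance (k : Type*) [Field k] (n : ℕ) (ε : Aq k n →ₐ[k] k) :
    Module ((Aq k n)ᵐᵒᵖ) (KE k n ε) :=
  Module.compHom k (epsOp k n ε)

instance (k : Type*) [Field k] (n : ℕ) (ε : Aq k n →ₐ[k] k) :
    SMulCommClass ((Aq k n)ᵐᵒᵖ) k (KE k n ε) :=
  ⟨fun a c x => by
    show epsOp k n ε a • (c • x) = c • (epsOp k n ε a • x)
    rw [smul_smul, smul_smul, mul_comm]⟩

/-- The free right `A`-module `P_ℓ = kC_ℓ ⊗ₖ A` with basis `C_ℓ` (for `ℓ ≥ 1`), realized as a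
left module over the opposite algebra `Aᵐᵒᵖ`. -/
abbrev Pmod (k : Type*) [Field k] (n : ℕ) (hn : 2 ≤ n) (l : ℕ) :=
  ↥(Cset n hn l) →₀ Aq k n

/-- The element `v^{(ℓ)}_{j,i} ⊗ a` of `P_ℓ`. -/
noncomputable def bas (k : Type*) [Field k] (n : ℕ) (hn : 2 ≤ n) (l : ℕ) (v : Mat n)
    (hv : v ∈ V n) (j i : Fin n) (a : Aq k n) : Pmod k n hn l :=
  Finsupp.single ⟨chainWord n hn v l j i, ⟨v, hv, j, i, rfl⟩⟩ a

/-- Pre-composition with a homomorphism of right `A`-modules, as the `k`-linear map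
`Hom_A(N, k_ε) → Hom_A(M, k_ε)`, `g ↦ g ∘ d`. -/
noncomputable def homMap (k : Type*) [Field k] {n : ℕ} (ε : Aq k n →ₐ[k] k) {M N : Type*}
    [AddCommMonoid M] [AddCommMonoid N] [Module ((Aq k n)ᵐᵒᵖ) M] [Module ((Aq k n)ᵐᵒᵖ) N]
    (d : M →ₗ[(Aq k n)ᵐᵒᵖ] N) :
    (N →ₗ[(Aq k n)ᵐᵒᵖ] KE k n ε) →ₗ[k] (M →ₗ[(Aq k n)ᵐᵒᵖ] KE k n ε) where
  toFun g := g.comp d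
  map_add' _ _ := LinearMap.ext fun _ => rfl
  map_smul' _ _ := LinearMap.ext fun _ => rfl

/-- The right-hand side of the defining formula for `d₂` on the basis element
`v^{(2)}_{j,i} ⊗ 1`. -/
noncomputable def d2RHS (k : Type*) [Field k] (n : ℕ) (hn : 2 ≤ n) (v : Mat n)
    (hv : v ∈ V n) (j i : Fin n) : Pmod k n hn 1 :=
  (∑ s : Fin n, bas k n hn 1 v hv j s (gen k (mD v) s i.rev))
    + bas k n hn 1 (mD v) (V_mD hv) j.rev i 1
    - (if j = finN n hn ∧ i = finN n hn then
        ∑ s ∈ Finset.univ.filter (fun s : Fin n => s ≠ fin1 n hn),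
          ((∑ t : Fin n, bas k n hn 1 v hv t s (gen k (mD v) s t.rev))
            + bas k n hn 1 (mD v) (V_mD hv) s s.rev 1)
      else 0)

/-- The right-hand side of the defining formula for `d_ℓ`, `ℓ ≥ 3`, on the basis element
`v^{(ℓ)}_{j,i} ⊗ 1`. -/
noncomputable def dTail (k : Type*) [Field k] (n : ℕ) (hn : 2 ≤ n) (l : ℕ) (v : Mat n)
    (hv : v ∈ V n) (j i : Fin n) : Pmod k n hn (l - 1) :=
  (∑ s : Fin n, bas k n hn (l - 1) v hv j s (gen k (pw l v) s i.rev))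
    + bas k n hn (l - 1) (mD v) (V_mD hv) j.rev i ((-1 : Aq k n) ^ l)
    + (if j = finN n hn then
        ((bas k n hn (l - 1) (mT v) (V_mT hv) (fin1 n hn) (fin1 n hn)
              (gen k (pw l (mT v)) i.rev (finN n hn))
            + (if l = 3 then
                ∑ s ∈ Finset.univ.filter (fun s : Fin n => s ≠ fin1 n hn ∧ s ≠ finN n hn),
                  bas k n hn (l - 1) (mT v) (V_mT hv) s s (gen k (pw l (mT v)) i.rev (finN n hn))
              else 0))
          - (if i = finN n hn then
              (∑ s : Fin n, bas k n hn (l - 1) (mT v) (V_mT hv) (fin1 n hn) s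
                  (gen k (pw l (mT v)) s (finN n hn)))
                + bas k n hn (l - 1) (mS v) (V_mS hv) (finN n hn) (fin1 n hn) ((-1 : Aq k n) ^ l)
            else 0))
      else 0)
    + (if j = fin1 n hn ∧ i = finN n hn then
        bas k n hn (l - 1) (mS v) (V_mS hv) (fin1 n hn) (fin1 n hn) ((-1 : Aq k n) ^ l)
          + (if l = 3 then
              ∑ s ∈ Finset.univ.filter (fun s : Fin n => s ≠ fin1 n hn ∧ s ≠ finN n hn),
                bas k n hn (l - 1) (mS v) (V_mS hv) s s ((-1 : Aq k n) ^ l)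
            else 0)
      else 0)

/-- The system of identities from STATEMENT 14, for a fixed `v ∈ V`. -/
noncomputable def cond14 (k : Type*) [Field k] {n : ℕ} (hn : 2 ≤ n) (ε : Aq k n →ₐ[k] k)
    (g : Pmod k n hn 1 →ₗ[(Aq k n)ᵐᵒᵖ] KE k n ε) (v : Mat n) (hv : v ∈ V n) : Prop :=
  ∀ j i : Fin n, g (bas k n hn 1 (mS v) (V_mS hv) j i 1) = -g (bas k n hn 1 v hv i j 1)

/-- The system of identities (1)–(4) from STATEMENT 16, for a fixed `v ∈ V`. -/
noncomputable def cond16 (k : Type*) [Field k] {n : ℕ} (hn : 2 ≤ n) (ε : Aq k n →ₐ[k] k)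
    (l : ℕ) (g : Pmod k n hn (l - 1) →ₗ[(Aq k n)ᵐᵒᵖ] KE k n ε) (v : Mat n)
    (hv : v ∈ V n) : Prop :=
  (∀ j i : Fin n, (j, i) ≠ (fin1 n hn, fin1 n hn) →
      g (bas k n hn (l - 1) (mT v) (V_mT hv) j i 1) =
        -(((-1 : k) ^ l) • g (bas k n hn (l - 1) (mS v) (V_mS hv) j.rev i.rev 1))
          - (if j = finN n hn ∧ i = finN n hn then
              g (bas k n hn (l - 1) v hv (fin1 n hn) (fin1 n hn) 1)
                + (if l = 3 then
                    ∑ s ∈ Finset.univ.filter (fun s : Fin n => s ≠ fin1 n hn ∧ s ≠ finN n hn),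
                      g (bas k n hn (l - 1) v hv s s 1)
                  else 0)
            else 0)) ∧
  (∀ j i : Fin n, (j, i) ≠ (fin1 n hn, fin1 n hn) →
      g (bas k n hn (l - 1) (mD v) (V_mD hv) j i 1) =
        -(((-1 : k) ^ l) • g (bas k n hn (l - 1) v hv j.rev i.rev 1))
          - (if j = finN n hn ∧ i = finN n hn then
              g (bas k n hn (l - 1) (mS v) (V_mS hv) (fin1 n hn) (fin1 n hn) 1)
                + (if l = 3 then
                    ∑ s ∈ Finset.univ.filter (fun s : Fin n => s ≠ fin1 n hn ∧ s ≠ finN n hn),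
                      g (bas k n hn (l - 1) (mS v) (V_mS hv) s s 1)
                  else 0)
            else 0)) ∧
  (g (bas k n hn (l - 1) (mD v) (V_mD hv) (fin1 n hn) (fin1 n hn) 1) =
      -(((-1 : k) ^ l) • g (bas k n hn (l - 1) (mT v) (V_mT hv) (fin1 n hn) (fin1 n hn) 1))
        - ((-1 : k) ^ l) • g (bas k n hn (l - 1) v hv (finN n hn) (finN n hn) 1)
        + (if l = 3 then
            ∑ s ∈ Finset.univ.filter (fun s : Fin n => s ≠ fin1 n hn ∧ s ≠ finN n hn),
              g (bas k n hn (l - 1) (mS v) (V_mS hv) s s 1)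
          else 0)) ∧
  (g (bas k n hn (l - 1) (mS v) (V_mS hv) (finN n hn) (finN n hn) 1) =
      -(if l = 3 then
          ∑ s ∈ Finset.univ.filter (fun s : Fin n => s ≠ fin1 n hn ∧ s ≠ finN n hn),
            g (bas k n hn (l - 1) (mS v) (V_mS hv) s s 1)
        else 0)
        + ((-1 : k) ^ l) • (g (bas k n hn (l - 1) v hv (finN n hn) (finN n hn) 1)
            + (if l = 3 then
                ∑ s ∈ Finset.univ.filter (fun s : Fin n => s ≠ fin1 n hn ∧ s ≠ finN n hn),
                  g (bas k n hn (l - 1) v hv s s 1)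
              else 0)))


/-!
For `ℓ ≥ 3` the chain words `v^{(ℓ)}_{j,i}` are pairwise distinct: the first two letters
`v_{j,n}` and `(v^δ)_{1,n}` determine `v` and `j`, and the last one determines `i`. So evaluation on
the basis identifies `Hom_A(P_ℓ, k_ε)` with `k`-valued functions on `V × {1,…,n}²`, and since `ε`
sends every generator `v_{s,t}` to `δ_{s,t}`, the map `g ↦ g ∘ d_ℓ` becomes an explicit
`4n² × 4n²` matrix (`dualDiff ((-1)^ℓ)`). A vector in its kernel is determined by its entries at
`v ∈ {u, uᵀ}`, and, because `((-1)^ℓ)² = 1`, every choice of these `2n²` entries extends to one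
(`kerParam`). Rank–nullity then gives the image.
-/

section Conjugation

universe u v

variable {R : Type*} [Ring R] {M N : Type u} {M' N' : Type v} [AddCommGroup M] [AddCommGroup N]
  [AddCommGroup M'] [AddCommGroup N'] [Module R M] [Module R N] [Module R M'] [Module R N']

theorem rank_ker_and_rank_range_eq_of_comm (e₁ : M ≃ₗ[R] N) (e₂ : M' ≃ₗ[R] N')
    {f : M →ₗ[R] M'} {T : N →ₗ[R] N'} (h : ∀ x, e₂ (f x) = T (e₁ x)) :
    Module.rank R (LinearMap.ker f) = Module.rank R (LinearMap.ker T) ∧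
      Module.rank R (LinearMap.range f) = Module.rank R (LinearMap.range T) := by
  obtain rfl : f = (e₂.symm : N' →ₗ[R] M') ∘ₗ T ∘ₗ (e₁ : M →ₗ[R] N) := by
    ext x
    simp [← h]
  refine ⟨?_, ?_⟩
  · rw [LinearEquiv.ker_comp, LinearMap.ker_comp]
    exact (e₁.ofSubmodule' _).rank_eq
  · rw [LinearMap.range_comp, LinearEquiv.range_comp]
    exact e₂.symm.rank_map_eq _

end Conjugation

section Indexing

abbrev ChainIdx (n : ℕ) := (Bool × Bool) × Fin n × Fin n

variable {n : ℕ}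

-- `u, uᵀ, u^σ, u^δ` are `vOf` of `(false, false), (false, true), (true, false), (true, true)`.
def vOf (n : ℕ) (p : Bool × Bool) : Mat n :=
  (if p.1 then mS else id) ((if p.2 then mT else id) (uMat n))

theorem vOf_mem (p : Bool × Bool) : vOf n p ∈ V n := by
  rcases p with ⟨_ | _, _ | _⟩
  exacts [Or.inl rfl, Or.inr (Or.inl rfl), Or.inr (Or.inr (Or.inl rfl)),
    Or.inr (Or.inr (Or.inr rfl))]

theorem exists_vOf_eq {v : Mat n} (hv : v ∈ V n) : ∃ p, vOf n p = v := by
  simp only [V, Set.mem_insert_iff, Set.mem_singleton_iff] at hv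
  rcases hv with rfl | rfl | rfl | rfl
  exacts [⟨(false, false), rfl⟩, ⟨(false, true), rfl⟩, ⟨(true, false), rfl⟩,
    ⟨(true, true), rfl⟩]

theorem mD_vOf (p : Bool × Bool) : mD (vOf n p) = vOf n (!p.1, !p.2) := by
  rcases p with ⟨_ | _, _ | _⟩ <;> funext j i <;> simp [vOf, mS, mT, mD, genStar]

theorem mT_vOf (p : Bool × Bool) : mT (vOf n p) = vOf n (p.1, !p.2) := by
  rcases p with ⟨_ | _, _ | _⟩ <;> funext j i <;> simp [vOf, mS, mT, genStar]

theorem mS_vOf (p : Bool × Bool) : mS (vOf n p) = vOf n (!p.1, p.2) := by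
  rcases p with ⟨_ | _, _ | _⟩ <;> funext j i <;> simp [vOf, mS, mT, genStar]

theorem pw_mem {v : Mat n} (hv : v ∈ V n) (l : ℕ) : pw l v ∈ V n := by
  unfold pw
  split_ifs
  exacts [hv, V_mD hv]

theorem eq_of_mem_V_of_apply_eq {v : Mat n} (hv : v ∈ V n) {j i j' i' : Fin n}
    (h : v j i = v j' i') : j = j' ∧ i = i' := by
  simp only [V, Set.mem_insert_iff, Set.mem_singleton_iff] at hv
  rcases hv with rfl | rfl | rfl | rfl <;>
    simp_all [uMat, mT, mS, mD, genStar, Fin.rev_inj]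

variable (hn : 2 ≤ n)

theorem rev_fin1 : (fin1 n hn).rev = finN n hn := by
  simp [fin1, finN, Fin.rev]

theorem rev_finN : (finN n hn).rev = fin1 n hn := by
  simp [fin1, finN, Fin.rev, Fin.ext_iff]; omega

theorem fin1_ne_finN : fin1 n hn ≠ finN n hn := by
  simp [fin1, finN, Fin.ext_iff]; omega

theorem rev_eq_finN_iff {i : Fin n} : i.rev = finN n hn ↔ i = fin1 n hn := by
  rw [← rev_fin1 hn, Fin.rev_inj]

theorem rev_eq_fin1_iff {i : Fin n} : i.rev = fin1 n hn ↔ i = finN n hn := by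
  rw [← rev_finN hn, Fin.rev_inj]

theorem eq_of_mD_vOf_apply_eq {p q : Bool × Bool}
    (h : mD (vOf n p) (fin1 n hn) (finN n hn) = mD (vOf n q) (fin1 n hn) (finN n hn)) :
    p = q := by
  have := fin1_ne_finN hn
  rcases p with ⟨_ | _, _ | _⟩ <;> rcases q with ⟨_ | _, _ | _⟩ <;>
    simp_all [vOf, uMat, mT, mS, mD, genStar, rev_fin1 hn, rev_finN hn, eq_comm]

end Indexing

section Chains

variable {n : ℕ} (hn : 2 ≤ n)

theorem chainWord_toList (v : Mat n) {l : ℕ} (hl : 3 ≤ l) (j i : Fin n) :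
    ∃ mid : List (Gen n), FreeMonoid.toList (chainWord n hn v l j i) =
      v j (finN n hn) :: mD v (fin1 n hn) (finN n hn) :: (mid ++ [pw l v (fin1 n hn) i.rev]) := by
  set x := FreeMonoid.of (mD v (fin1 n hn) (finN n hn))
  set y := FreeMonoid.of (v (fin1 n hn) (finN n hn))
  obtain ⟨q, rfl | rfl⟩ := Nat.even_or_odd' l
  · refine ⟨FreeMonoid.toList (y * (x * y) ^ (q - 2)), ?_⟩
    have hq : (2 * q - 2) / 2 = q - 2 + 1 := by omega
    simp [chainWord, pw, show 2 * q ≠ 1 by omega, hq, pow_succ', ← mul_assoc, x, y]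
  · refine ⟨FreeMonoid.toList ((y * x) ^ (q - 1)), ?_⟩
    have hq : (2 * q - 2) / 2 = q - 1 := by omega
    simp [chainWord, pw, show q ≠ 0 by omega, hq, mul_pow_mul, mul_assoc, x, y]

theorem chainWord_injective {l : ℕ} (hl : 3 ≤ l) :
    Function.Injective fun x : ChainIdx n =>
      chainWord n hn (vOf n x.1) l x.2.1 x.2.2 := by
  rintro ⟨p, j, i⟩ ⟨q, j', i'⟩ h
  obtain ⟨mid, hmid⟩ := chainWord_toList hn (vOf n p) hl j i
  obtain ⟨mid', hmid'⟩ := chainWord_toList hn (vOf n q) hl j' i'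
  have h := congrArg FreeMonoid.toList h
  simp only [hmid, hmid', List.cons.injEq] at h
  obtain ⟨hfirst, hsecond, hrest⟩ := h
  obtain rfl := eq_of_mD_vOf_apply_eq hn hsecond
  have hlast := congrArg List.getLast? hrest
  simp only [List.getLast?_concat, Option.some.injEq] at hlast
  obtain ⟨rfl, -⟩ := eq_of_mem_V_of_apply_eq (vOf_mem p) hfirst
  obtain ⟨-, hi⟩ := eq_of_mem_V_of_apply_eq (pw_mem (vOf_mem p) l) hlast
  rw [Fin.rev_inj.mp hi]

noncomputable def chainEquiv {l : ℕ} (hl : 3 ≤ l) : ChainIdx n ≃ Cset n hn l :=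
  Equiv.ofBijective
    (fun x => ⟨chainWord n hn (vOf n x.1) l x.2.1 x.2.2,
      vOf n x.1, vOf_mem x.1, x.2.1, x.2.2, rfl⟩)
    ⟨fun _ _ h => chainWord_injective hn hl (congrArg Subtype.val h), by
      rintro ⟨w, v, hv, j, i, rfl⟩
      obtain ⟨p, rfl⟩ := exists_vOf_eq hv
      exact ⟨(p, j, i), rfl⟩⟩

end Chains

section DualDifferential

variable (k : Type*) [Field k] {n : ℕ} (hn : 2 ≤ n) (e : k)

-- With `e = (-1)^ℓ`, this is the matrix of `g ↦ g ∘ d_ℓ` in the coordinates `coordEquiv` below.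
def dualDiff : (ChainIdx n → k) →ₗ[k] (ChainIdx n → k) where
  toFun c
    | (p, j, i) =>
      c (p, j, i.rev) + e * c ((!p.1, !p.2), j.rev, i)
        + (if j = finN n hn then
            (if i = fin1 n hn then c ((p.1, !p.2), fin1 n hn, fin1 n hn) else 0)
              - (if i = finN n hn then
                  c ((p.1, !p.2), fin1 n hn, finN n hn) + e * c ((!p.1, p.2), finN n hn, fin1 n hn)
                else 0)
          else 0)
        + (if j = fin1 n hn ∧ i = finN n hn then e * c ((!p.1, p.2), fin1 n hn, fin1 n hn)
          else 0)
  map_add' c d := by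
    funext ⟨p, j, i⟩
    simp only [Pi.add_apply]
    split_ifs <;> ring
  map_smul' a c := by
    funext ⟨p, j, i⟩
    simp only [Pi.smul_apply, smul_eq_mul, RingHom.id_apply]
    split_ifs <;> ring

def kerParam : (Bool × Fin n × Fin n → k) →ₗ[k] (ChainIdx n → k) where
  toFun f
    | ((false, b), j, i) => f (b, j, i)
    | ((true, b), j, i) =>
      -(e * f (!b, j.rev, i.rev))
        - (if j = fin1 n hn ∧ i = fin1 n hn then e * f (b, fin1 n hn, fin1 n hn) else 0)
        + (if j = finN n hn ∧ i = finN n hn then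
            e * (f (b, finN n hn, finN n hn) + f (!b, fin1 n hn, fin1 n hn))
          else 0)
  map_add' c d := by
    funext ⟨⟨a, b⟩, j, i⟩
    cases a
    · rfl
    · simp only [Pi.add_apply]
      split_ifs <;> ring
  map_smul' a c := by
    funext ⟨⟨a, b⟩, j, i⟩
    cases a
    · rfl
    · simp only [Pi.smul_apply, smul_eq_mul, RingHom.id_apply]
      split_ifs <;> ring

theorem kerParam_injective : Function.Injective (kerParam k hn e) :=
  fun _ _ h => funext fun ⟨b, j, i⟩ => congrFun h ((false, b), j, i)

theorem dualDiff_kerParam (he : e * e = 1) (f : Bool × Fin n × Fin n → k) :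
    dualDiff k hn e (kerParam k hn e f) = 0 := by
  have h1N := fin1_ne_finN hn
  have trichotomy (x : Fin n) :
      x = fin1 n hn ∨ x = finN n hn ∨ (x ≠ fin1 n hn ∧ x ≠ finN n hn) := by
    tauto
  funext ⟨⟨a, b⟩, j, i⟩
  rcases trichotomy j with rfl | rfl | ⟨hj1, hjN⟩ <;>
    rcases trichotomy i with rfl | rfl | ⟨hi1, hiN⟩ <;> cases a <;>
    simp [dualDiff, kerParam, rev_fin1, rev_finN, rev_eq_fin1_iff, rev_eq_finN_iff, h1N.symm, *] <;>
    rcases mul_self_eq_one_iff.mp he with rfl | rfl <;> ring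

theorem eq_zero_of_dualDiff_eq_zero (he : e ≠ 0) {c : ChainIdx n → k}
    (hc : dualDiff k hn e c = 0) (h0 : ∀ b j i, c ((false, b), j, i) = 0) : c = 0 := by
  have h1N := fin1_ne_finN hn
  have hc' : ∀ b j i, dualDiff k hn e c ((false, b), j, i) = 0 := fun b j i => congrFun hc _
  simp only [dualDiff, LinearMap.coe_mk, AddHom.coe_mk, h0, zero_add, Bool.not_false] at hc'
  have h11 : ∀ b, c ((true, b), fin1 n hn, fin1 n hn) = 0 := fun b => by
    simpa [rev_finN, h1N, he] using hc' (!b) (finN n hn) (fin1 n hn)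
  have hN1 : ∀ b, c ((true, b), finN n hn, fin1 n hn) = 0 := fun b => by
    simpa [rev_fin1, h1N, he] using hc' (!b) (fin1 n hn) (fin1 n hn)
  funext ⟨⟨a, b⟩, j, i⟩
  cases a
  · exact h0 b j i
  · simpa [h11, hN1, he] using hc' (!b) j.rev i

theorem ker_dualDiff (he : e * e = 1) :
    LinearMap.ker (dualDiff k hn e) = LinearMap.range (kerParam k hn e) := by
  refine le_antisymm (fun c hc => ?_) (LinearMap.range_le_ker_iff.mpr
    (LinearMap.ext (dualDiff_kerParam k hn e he)))
  refine ⟨fun x => c ((false, x.1), x.2), (sub_eq_zero.mp ?_).symm⟩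
  refine eq_zero_of_dualDiff_eq_zero k hn e (left_ne_zero_of_mul_eq_one he) ?_
    fun _ _ _ => sub_self _
  rw [map_sub, LinearMap.mem_ker.mp hc, dualDiff_kerParam k hn e he, sub_zero]

theorem finrank_ker_dualDiff (he : e * e = 1) :
    Module.finrank k (LinearMap.ker (dualDiff k hn e)) = 2 * n ^ 2 := by
  rw [ker_dualDiff k hn e he, LinearMap.finrank_range_of_inj (kerParam_injective k hn e),
    Module.finrank_fintype_fun_eq_card]
  simp [sq]

theorem finrank_range_dualDiff (he : e * e = 1) :
    Module.finrank k (LinearMap.range (dualDiff k hn e)) = 2 * n ^ 2 := by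
  have := LinearMap.finrank_range_add_finrank_ker (dualDiff k hn e)
  rw [finrank_ker_dualDiff k hn e he, Module.finrank_fintype_fun_eq_card] at this
  simp only [Fintype.card_prod, Fintype.card_bool, Fintype.card_fin] at this
  linarith

end DualDifferential

section Coordinates

variable (k : Type*) [Field k] {n : ℕ} (hn : 2 ≤ n) (ε : Aq k n →ₐ[k] k)

noncomputable def evalOneEquiv : (Aq k n →ₗ[(Aq k n)ᵐᵒᵖ] KE k n ε) ≃ₗ[k] k where
  toFun f := f 1
  map_add' _ _ := rfl
  map_smul' _ _ := rfl
  invFun x :=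
    { toFun a := ε a * x
      map_add' a b := by
        show ε (a + b) * x = ε a * x + ε b * x
        rw [map_add, add_mul]
      map_smul' a b := by
        show ε (b * a.unop) * x = ε a.unop * (ε b * x)
        rw [map_mul, mul_assoc, mul_left_comm] }
  left_inv f := LinearMap.ext fun a => by
    show ε a • f 1 = f a
    conv_rhs => rw [← one_mul a, ← op_smul_eq_mul, map_smul]
    rfl
  right_inv x := by
    show ε 1 * x = x
    rw [map_one, one_mul]

variable {l : ℕ} (hl : 3 ≤ l)

noncomputable def coordEquiv :
    (Pmod k n hn l →ₗ[(Aq k n)ᵐᵒᵖ] KE k n ε) ≃ₗ[k] (ChainIdx n → k) :=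
  (Finsupp.lsum k).symm ≪≫ₗ LinearEquiv.piCongrRight (fun _ => evalOneEquiv k ε) ≪≫ₗ
    LinearEquiv.funCongrLeft k k (chainEquiv hn hl)

-- `KE k n ε` is `k` with transported instances; read as `k`-valued, `g` can be computed with the
-- arithmetic of `k`.
noncomputable def toFieldHom {M : Type*} [AddCommMonoid M] [Module (Aq k n)ᵐᵒᵖ M]
    (g : M →ₗ[(Aq k n)ᵐᵒᵖ] KE k n ε) : M →+ k :=
  g.toAddMonoidHom

theorem coordEquiv_apply (g : Pmod k n hn l →ₗ[(Aq k n)ᵐᵒᵖ] KE k n ε) (p : Bool × Bool)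
    (j i : Fin n) :
    coordEquiv k hn ε hl g (p, j, i) =
      toFieldHom k ε g (bas k n hn l (vOf n p) (vOf_mem p) j i 1) :=
  rfl

theorem toFieldHom_bas (g : Pmod k n hn l →ₗ[(Aq k n)ᵐᵒᵖ] KE k n ε)
    {v : Mat n} (hv : v ∈ V n) {p : Bool × Bool} (hp : vOf n p = v) (j i : Fin n) (a : Aq k n) :
    toFieldHom k ε g (bas k n hn l v hv j i a) = ε a * coordEquiv k hn ε hl g (p, j, i) := by
  subst hp
  show g (bas k n hn l _ hv j i a) = MulOpposite.op a • g (bas k n hn l _ (vOf_mem p) j i 1)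
  rw [← map_smul]
  simp only [bas, Finsupp.smul_single, op_smul_eq_mul, one_mul]

end Coordinates

section Differential

variable (k : Type*) [Field k] {n : ℕ} (hn : 2 ≤ n) (ε : Aq k n →ₐ[k] k)

theorem toFieldHom_sum_bas_gen {l : ℕ} (hl : 3 ≤ l) (g : Pmod k n hn l →ₗ[(Aq k n)ᵐᵒᵖ] KE k n ε)
    {v : Mat n} (hv : v ∈ V n) {p : Bool × Bool} (hp : vOf n p = v) {w : Mat n} {b : Fin n}
    (hw : ∀ s, ε (gen k w s b) = if s = b then 1 else 0) (j : Fin n) :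
    toFieldHom k ε g (∑ s, bas k n hn l v hv j s (gen k w s b)) =
      coordEquiv k hn ε hl g (p, j, b) := by
  simp only [map_sum, toFieldHom_bas k hn ε hl g hv hp, hw, ite_mul, one_mul, zero_mul,
    Finset.sum_ite_eq', Finset.mem_univ, if_true]

theorem coordEquiv_homMap
    (hε : ∀ v ∈ V n, ∀ j i : Fin n, ε (gen k v j i) = if j = i then 1 else 0) {l : ℕ} (hl : 4 ≤ l)
    (dl : Pmod k n hn l →ₗ[(Aq k n)ᵐᵒᵖ] Pmod k n hn (l - 1))
    (hdl : ∀ (v : Mat n) (hv : v ∈ V n) (j i : Fin n),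
      dl (bas k n hn l v hv j i 1) = dTail k n hn l v hv j i)
    (g : Pmod k n hn (l - 1) →ₗ[(Aq k n)ᵐᵒᵖ] KE k n ε) :
    coordEquiv k hn ε (by omega : 3 ≤ l) (homMap k ε dl g) =
      dualDiff k hn ((-1) ^ l) (coordEquiv k hn ε (by omega : 3 ≤ l - 1) g) := by
  have hl' : 3 ≤ l - 1 := by omega
  funext ⟨p, j, i⟩
  have hv := vOf_mem (n := n) p
  -- `simp` cannot use `map_sub`: the subtraction of `Pmod` is not reducibly that of its
  -- additive group.
  have hsub (x y : Pmod k n hn (l - 1)) : toFieldHom k ε g (x - y) =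
      toFieldHom k ε g x - toFieldHom k ε g y := map_sub _ x y
  rw [coordEquiv_apply]
  simp only [dualDiff, LinearMap.coe_mk, AddHom.coe_mk]
  show toFieldHom k ε g (dl _) = _
  rw [hdl, dTail]
  simp only [if_neg (show l ≠ 3 by omega), add_zero, map_add, hsub, apply_ite (toFieldHom k ε g),
    map_zero,
    toFieldHom_sum_bas_gen k hn ε hl' g hv rfl (hε _ (pw_mem hv l) · _),
    toFieldHom_sum_bas_gen k hn ε hl' g (V_mT hv) (mT_vOf p).symm (hε _ (pw_mem (V_mT hv) l) · _),
    toFieldHom_bas k hn ε hl' g (V_mD hv) (mD_vOf p).symm,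
    toFieldHom_bas k hn ε hl' g (V_mT hv) (mT_vOf p).symm,
    toFieldHom_bas k hn ε hl' g (V_mS hv) (mS_vOf p).symm,
    hε _ (pw_mem (V_mT hv) l), map_pow, map_neg, map_one, ite_mul, one_mul, zero_mul,
    rev_eq_finN_iff]

end Differential

theorem statement_18 (k : Type*) [Field k] (n : ℕ) (hn : 2 ≤ n)
    (ε : Aq k n →ₐ[k] k)
    (hε : ∀ v ∈ V n, ∀ j i : Fin n, ε (gen k v j i) = if j = i then 1 else 0)
    (l : ℕ) (hl : 4 ≤ l)
    (dl : Pmod k n hn l →ₗ[(Aq k n)ᵐᵒᵖ] Pmod k n hn (l - 1))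
    (hdl : ∀ (v : Mat n) (hv : v ∈ V n) (j i : Fin n),
      dl (bas k n hn l v hv j i 1) = dTail k n hn l v hv j i) :
    Module.rank k (LinearMap.ker (homMap k ε dl)) = ((2 * n ^ 2 : ℕ) : Cardinal) ∧
      Module.rank k (LinearMap.range (homMap k ε dl)) = ((2 * n ^ 2 : ℕ) : Cardinal) := by
  have he : ((-1 : k) ^ l) * (-1) ^ l = 1 := by rw [← mul_pow]; norm_num
  obtain ⟨hker, hrange⟩ := rank_ker_and_rank_range_eq_of_comm
    (coordEquiv k hn ε (by omega : 3 ≤ l - 1)) (coordEquiv k hn ε (by omega : 3 ≤ l))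
    (coordEquiv_homMap k hn ε hε hl dl hdl)
  rw [hker, hrange, ← Module.finrank_eq_rank, ← Module.finrank_eq_rank,
    finrank_ker_dualDiff k hn _ he, finrank_range_dualDiff k hn _ he]
  exact ⟨rfl, rfl⟩

end UnPlusAnick
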